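/- If μ(σ₀) < μ(0)(1 − σ₀/σ_L) for some 0 < σ₀ < σ_L, then there exist an integer k ≥ 1 and α with 0 < α ≤ kμ(0) for which the strict inequality σ_k(α) < σ_L·(1 − α/(kμ(0))) holds. -/

import Mathlib

/-!
Take `k = 1`. Since `μ(σ₀) < μ(0)(1 - σ₀/σ_L)`, there is an exponent `m` below that bound with
`f(σ₀ + it) = O(|t|^m)`; choose `α` strictly between `m` and `μ(0)(1 - σ₀/σ_L)`. Then
`|f(σ₀+it)|² |σ₀+it|^{-(2α+1)} = O(|t|^{2m-2α-1})` with `2m - 2α - 1 < -1`, so the integral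
converges at `σ₀` and `σ₁(α) ≤ σ₀`, while `α < μ(0)(1 - σ₀/σ_L)` is exactly
`σ₀ < σ_L (1 - α/μ(0))`.
-/

open Complex Filter MeasureTheory Set Asymptotics Topology

noncomputable section

/-- The abscissa `σ_k(α)`: infimum of `σ ≥ 0` such that
`∫_ℝ |f(σ+it)|^{2k} |σ+it|^{-(2α+1)} dt < ∞`. -/
def sigmaK (f : ℂ → ℂ) (k : ℕ) (α : ℝ) : ℝ :=
  sInf {σ : ℝ | 0 ≤ σ ∧
    Integrable (fun t : ℝ => ‖f (σ + t * I)‖ ^ (2 * k) / ‖(σ : ℂ) + t * I‖ ^ (2 * α + 1))}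

theorem integrableAtFilter_abs_rpow_cocompact {q : ℝ} (hq : q < -1) :
    IntegrableAtFilter (fun t : ℝ => |t| ^ q) (cocompact ℝ) := by
  have hIoi : IntegrableOn (fun t : ℝ => |t| ^ q) (Ioi 1) :=
    (integrableOn_Ioi_rpow_of_lt hq one_pos).congr_fun
      (fun t ht => by rw [abs_of_pos (one_pos.trans ht)]) measurableSet_Ioi
  have hIio : IntegrableOn (fun t : ℝ => |t| ^ q) (Iio (-1)) := by
    have := ((Measure.measurePreserving_neg volume).integrableOn_comp_preimage
      (Homeomorph.neg ℝ).measurableEmbedding).mpr hIoi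
    simpa [Function.comp_def, lt_neg] using this
  exact ⟨(Icc (-1) 1)ᶜ, isCompact_Icc.compl_mem_cocompact,
    (hIio.union hIoi).mono_set fun t ht => by
      simp only [mem_compl_iff, mem_Icc, not_and_or, not_le] at ht; exact ht⟩

theorem integrable_norm_pow_div_norm_rpow {F : ℝ → ℂ} {σ m α : ℝ} {k : ℕ} (hσ : 0 < σ)
    (hm : 0 ≤ m) (hF : Continuous F) (hO : F =O[cocompact ℝ] fun t => |t| ^ m)
    (hα : k * m < α) :
    Integrable fun t : ℝ => ‖F t‖ ^ (2 * k) / ‖(σ : ℂ) + t * I‖ ^ (2 * α + 1) := by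
  have hnorm_pos (t : ℝ) : 0 < ‖(σ : ℂ) + t * I‖ :=
    hσ.trans_le (by simpa [abs_of_pos hσ] using abs_re_le_norm ((σ : ℂ) + t * I))
  have hcont : Continuous fun t : ℝ => ‖F t‖ ^ (2 * k) / ‖(σ : ℂ) + t * I‖ ^ (2 * α + 1) :=
    (hF.norm.pow _).div ((by fun_prop : Continuous fun t : ℝ => ‖(σ : ℂ) + t * I‖).rpow_const
      fun t => .inl (hnorm_pos t).ne') fun t => (Real.rpow_pos_of_pos (hnorm_pos t) _).ne'
  refine hcont.locallyIntegrable.integrable_of_isBigO_cocompact ?_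
    (integrableAtFilter_abs_rpow_cocompact (q := 2 * k * m - (2 * α + 1)) (by linarith))
  have hne : ∀ᶠ t : ℝ in cocompact ℝ, t ≠ 0 := isCompact_singleton.compl_mem_cocompact
  have hnum : (fun t => ‖F t‖ ^ (2 * k)) =O[cocompact ℝ] fun t => |t| ^ (2 * k * m) := by
    refine (hO.norm_left.pow (2 * k)).congr_right fun t => ?_
    rw [← Real.rpow_mul_natCast (abs_nonneg t)]
    push_cast
    ring_nf
  have hden : (fun t : ℝ => (‖(σ : ℂ) + t * I‖ ^ (2 * α + 1))⁻¹) =O[cocompact ℝ]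
      fun t => |t| ^ (-(2 * α + 1)) := by
    have hp : 0 ≤ 2 * α + 1 := by linarith [show 0 ≤ (k : ℝ) * m by positivity]
    refine IsBigO.of_bound' ?_
    filter_upwards [hne] with t ht
    rw [Real.rpow_neg (abs_nonneg t), Real.norm_of_nonneg (inv_nonneg.2 (by positivity)),
      Real.norm_of_nonneg (inv_nonneg.2 (by positivity))]
    refine inv_anti₀ (by positivity) (Real.rpow_le_rpow (abs_nonneg t) ?_ hp)
    simpa using abs_im_le_norm ((σ : ℂ) + t * I)
  refine (hnum.mul hden).congr' (.of_forall fun t => (div_eq_mul_inv _ _).symm) ?_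
  filter_upwards [hne] with t ht
  rw [← Real.rpow_add (abs_pos.2 ht)]
  ring_nf

theorem sigmaK_le_of_integrable {f : ℂ → ℂ} {k : ℕ} {α σ : ℝ} (hσ : 0 ≤ σ)
    (hint : Integrable fun t : ℝ => ‖f (σ + t * I)‖ ^ (2 * k) / ‖(σ : ℂ) + t * I‖ ^ (2 * α + 1)) :
    sigmaK f k α ≤ σ :=
  csInf_le ⟨0, fun _ h => h.1⟩ ⟨hσ, hint⟩

theorem strict_inequality_of_nonlinear_order_general
    (f : ℂ → ℂ) (mu : ℝ → ℝ) (σL : ℝ)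
    (hf : DifferentiableOn ℂ f {s : ℂ | 0 < s.re})
    (hmu : ∀ σ : ℝ, 0 < σ → mu σ =
      sInf {m : ℝ | 0 ≤ m ∧ (fun t : ℝ => f (σ + t * I)) =O[cocompact ℝ] fun t : ℝ => |t| ^ m})
    (hσL : σL = sInf {σ : ℝ | 0 ≤ σ ∧ mu σ = 0})
    (hmu0pos : 0 < mu 0)
    (σ₀ : ℝ) (hσ₀pos : 0 < σ₀) (hσ₀lt : σ₀ < σL)
    (hstrict : mu σ₀ < mu 0 * (1 - σ₀ / σL)) :
    ∃ k : ℕ, 1 ≤ k ∧ ∃ α : ℝ, 0 < α ∧ α ≤ (k : ℝ) * mu 0 ∧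
      sigmaK f k α < σL * (1 - α / ((k : ℝ) * mu 0)) := by
  have hσLpos : 0 < σL := hσ₀pos.trans hσ₀lt
  set B := mu 0 * (1 - σ₀ / σL) with hB_def
  have hB : B ≤ mu 0 :=
    mul_le_of_le_one_right hmu0pos.le (by simp only [sub_le_self_iff]; positivity)
  -- Rules out an empty defining set for `mu σ₀`, whose `sInf` would be the junk value `0`.
  have hmu_ne : mu σ₀ ≠ 0 := fun h =>
    hσ₀lt.not_ge (hσL ▸ csInf_le ⟨0, fun _ h => h.1⟩ ⟨hσ₀pos.le, h⟩)
  rw [hmu σ₀ hσ₀pos] at hmu_ne hstrict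
  obtain ⟨m, ⟨hm, hmO⟩, hmB⟩ := exists_lt_of_csInf_lt
    (nonempty_iff_ne_empty.2 fun h => hmu_ne (by rw [h, Real.sInf_empty])) hstrict
  have hF : Continuous fun t : ℝ => f (σ₀ + t * I) :=
    hf.continuousOn.comp_continuous (by fun_prop) fun t => by simpa using hσ₀pos
  have hσK : sigmaK f 1 ((m + B) / 2) ≤ σ₀ :=
    sigmaK_le_of_integrable hσ₀pos.le
      (integrable_norm_pow_div_norm_rpow hσ₀pos hm hF hmO (by push_cast; linarith))
  refine ⟨1, le_rfl, (m + B) / 2, by linarith, by push_cast; linarith, hσK.trans_lt ?_⟩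
  have hα : (m + B) / 2 / mu 0 < 1 - σ₀ / σL := by rw [div_lt_iff₀ hmu0pos]; linarith
  calc σ₀ = σL * (σ₀ / σL) := (mul_div_cancel₀ σ₀ hσLpos.ne').symm
    _ < σL * (1 - (m + B) / 2 / ((1 : ℕ) * mu 0)) := by
      rw [Nat.cast_one, one_mul]; gcongr; linarith

theorem strict_inequality_of_nonlinear_order
    (f : ℂ → ℂ) (c : ℕ → ℂ) (mu : ℝ → ℝ) (σL : ℝ)
    (hf : DifferentiableOn ℂ f {s : ℂ | 0 < s.re})
    (hconv : ∀ s : ℂ, 0 < s.re →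
      Tendsto (fun N : ℕ => ∑ n ∈ Finset.range N, c (n + 1) * (n + 1 : ℂ) ^ (-s))
        atTop (𝓝 (f s)))
    (hdiv : ∀ s : ℂ, s.re < 0 → ¬ ∃ L : ℂ,
      Tendsto (fun N : ℕ => ∑ n ∈ Finset.range N, c (n + 1) * (n + 1 : ℂ) ^ (-s))
        atTop (𝓝 L))
    (habs : ∀ s : ℂ, 1 < s.re → Summable fun n : ℕ => ‖c (n + 1) * (n + 1 : ℂ) ^ (-s)‖)
    (hnabs : ∀ s : ℂ, s.re < 1 → ¬ Summable fun n : ℕ => ‖c (n + 1) * (n + 1 : ℂ) ^ (-s)‖)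
    (hmu : ∀ σ : ℝ, 0 < σ → mu σ =
      sInf {m : ℝ | 0 ≤ m ∧ (fun t : ℝ => f (σ + t * I)) =O[cocompact ℝ] fun t : ℝ => |t| ^ m})
    (hmu0 : Tendsto mu (𝓝[>] (0 : ℝ)) (𝓝 (mu 0)))
    (hσL : σL = sInf {σ : ℝ | 0 ≤ σ ∧ mu σ = 0})
    (hσLpos : 0 < σL) (hmu0pos : 0 < mu 0)
    (σ₀ : ℝ) (hσ₀pos : 0 < σ₀) (hσ₀lt : σ₀ < σL)
    (hstrict : mu σ₀ < mu 0 * (1 - σ₀ / σL)) :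
    ∃ k : ℕ, 1 ≤ k ∧ ∃ α : ℝ, 0 < α ∧ α ≤ (k : ℝ) * mu 0 ∧
      sigmaK f k α < σL * (1 - α / ((k : ℝ) * mu 0)) :=
  strict_inequality_of_nonlinear_order_general f mu σL hf hmu hσL hmu0pos σ₀ hσ₀pos hσ₀lt hstrict
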